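/- arXiv:1205.2911 — 3 statements merged into one kernel-verified Lean document; each statement's English description precedes it below -/
import Mathlib

section
/- Let S be a symmetric real n×n matrix with strictly positive diagonal entries and let λ ≥ 0. Then there exists a minimizer Θ̂ of the graphical lasso objective f over the set of positive definite symmetric real n×n matrices such that Θ̂ᵢⱼ = 0 for all i ≠ j if and only if |Sᵢⱼ| ≤ λ for all i ≠ j. -/
open Matrix

/-- The graphical lasso objective:
`f(Θ) = trace(S·Θ) − log det Θ + λ·∑_{i≠j} |Θᵢⱼ|`. -/
noncomputable def glassoObj {n : ℕ} (S : Matrix (Fin n) (Fin n) ℝ) (lam : ℝ)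
    (Θ : Matrix (Fin n) (Fin n) ℝ) : ℝ :=
  (S * Θ).trace - Real.log Θ.det
    + lam * ∑ i, ∑ j, if i ≠ j then |Θ i j| else 0

/-!
Write `D⋆ = diag(1/Sᵢᵢ)`. On diagonal matrices the objective separates into
`∑ᵢ (Sᵢᵢ dᵢ − log dᵢ)`, which `D⋆` minimizes. If `|Sᵢⱼ| ≤ λ` off the diagonal, the penalty absorbs
the off-diagonal part of `trace(SΘ)`, and Hadamard's inequality `det Θ ≤ ∏ Θᵢᵢ` then shows that
replacing `Θ` by its diagonal does not increase the objective; so `D⋆` is a global minimizer.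
Conversely, if `|Sᵢⱼ| > λ`, the rank-one perturbation `D⋆ + t vvᵀ` with `v = eᵢ − sign(Sᵢⱼ) eⱼ`
changes the objective by `t(c − 2(|Sᵢⱼ| − λ)) − log(1 + tc)`, `c = Sᵢᵢ + Sⱼⱼ`, which is negative
for small `t > 0`; since no diagonal matrix does better than `D⋆`, no diagonal matrix is then a
minimizer.
-/

theorem Real.one_add_log_le_mul_sub_log {a x : ℝ} (ha : 0 < a) (hx : 0 < x) :
    1 + Real.log a ≤ a * x - Real.log x := by
  have h := Real.log_le_sub_one_of_pos (mul_pos ha hx)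
  rw [Real.log_mul ha.ne' hx.ne'] at h
  linarith

theorem Real.exists_pos_mul_sub_lt_log_one_add_mul {c ε : ℝ} (hc : 0 ≤ c) (hε : 0 < ε) :
    ∃ t > 0, t * (c - ε) < Real.log (1 + t * c) := by
  have hlog : ∀ x : ℝ, 0 ≤ x → x - x ^ 2 ≤ Real.log (1 + x) := fun x hx => by
    have h := Real.one_sub_inv_le_log_of_pos (by positivity : 0 < 1 + x)
    have : x - x ^ 2 ≤ 1 - (1 + x)⁻¹ := by
      rw [le_sub_iff_add_le, ← le_sub_iff_add_le', inv_le_iff_one_le_mul₀ (by positivity)]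
      nlinarith [pow_nonneg hx 3]
    linarith
  set t := ε / (c ^ 2 + 1)
  have ht : 0 < t := by positivity
  have htc : t * c ^ 2 < ε := by
    rw [div_mul_eq_mul_div, div_lt_iff₀ (by positivity)]
    linarith
  refine ⟨t, ht, ?_⟩
  calc t * (c - ε) < t * c - (t * c) ^ 2 := by nlinarith
    _ ≤ Real.log (1 + t * c) := hlog _ (by positivity)

namespace Matrix

variable {ι : Type*} [Fintype ι]

theorem trace_mul_vecMulVec_self (S : Matrix ι ι ℝ) (u : ι → ℝ) :
    (S * vecMulVec u u).trace = u ⬝ᵥ S *ᵥ u := by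
  rw [mul_vecMulVec, trace_vecMulVec, dotProduct_comm]

variable [DecidableEq ι]

theorem PosDef.log_det_le_trace_sub_card {A : Matrix ι ι ℝ} (hA : A.PosDef) :
    Real.log A.det ≤ A.trace - Fintype.card ι := by
  have hpos := hA.eigenvalues_pos
  rw [hA.isHermitian.det_eq_prod_eigenvalues, hA.isHermitian.trace_eq_sum_eigenvalues]
  simp only [RCLike.ofReal_real_eq_id, id]
  rw [Real.log_prod fun i _ => (hpos i).ne']
  calc ∑ i, Real.log (hA.isHermitian.eigenvalues i)
      ≤ ∑ i, (hA.isHermitian.eigenvalues i - 1) :=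
        Finset.sum_le_sum fun i _ => Real.log_le_sub_one_of_pos (hpos i)
    _ = _ := by simp [Finset.sum_sub_distrib]

theorem PosDef.det_le_prod_diag {A : Matrix ι ι ℝ} (hA : A.PosDef) : A.det ≤ ∏ i, A i i := by
  have hdiag : ∀ i, 0 < A i i := fun i => hA.diag_pos
  set b : ι → ℝ := fun i => (√(A i i))⁻¹
  have hb : ∀ i, A i i * (b i * b i) = 1 := fun i => by
    simp [b, ← mul_inv, Real.mul_self_sqrt (hdiag i).le, (hdiag i).ne']
  have hB : (diagonal b * A * diagonal b).PosDef := by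
    simpa using hA.conjTranspose_mul_mul_same (B := diagonal b)
      (mulVec_injective_of_isUnit (isUnit_diagonal.2 (Pi.isUnit_iff.2 fun i =>
        (inv_pos.2 (Real.sqrt_pos.2 (hdiag i))).ne'.isUnit)))
  have htr : (diagonal b * A * diagonal b).trace = Fintype.card ι := by
    simp [trace, diagonal_mul, mul_diagonal, mul_comm, mul_left_comm, hb]
  have hdet : (diagonal b * A * diagonal b).det * ∏ i, A i i = A.det := by
    calc (diagonal b * A * diagonal b).det * ∏ i, A i i
        = A.det * ∏ i, (A i i * (b i * b i)) := by
          simp only [det_mul, det_diagonal, Finset.prod_mul_distrib]; ring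
      _ = A.det := by simp [hb]
  have hprod : 0 < ∏ i, A i i := Finset.prod_pos fun i _ => hdiag i
  have hle : (diagonal b * A * diagonal b).det ≤ 1 := by
    have := hB.log_det_le_trace_sub_card
    rw [htr, sub_self] at this
    exact (Real.log_nonpos_iff hB.det_pos.le).1 this
  rw [← hdet]
  exact mul_le_of_le_one_left hprod.le hle

theorem det_add_vecMulVec {A : Matrix ι ι ℝ} (hA : IsUnit A.det) (u v : ι → ℝ) :
    (A + vecMulVec u v).det = A.det * (1 + v ⬝ᵥ A⁻¹ *ᵥ u) := by
  rw [vecMulVec_eq Unit, det_add_replicateCol_mul_replicateRow hA]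
  congr 1
  simp [det_unique, mul_apply, dotProduct, mulVec, Finset.mul_sum, mul_comm, mul_left_comm]
  exact Finset.sum_comm

def offDiagAbsSum (A : Matrix ι ι ℝ) : ℝ := ∑ i, ∑ j, if i ≠ j then |A i j| else 0

theorem offDiagAbsSum_diagonal_add (d : ι → ℝ) (A : Matrix ι ι ℝ) :
    offDiagAbsSum (diagonal d + A) = offDiagAbsSum A := by
  unfold offDiagAbsSum
  refine Finset.sum_congr rfl fun i _ => Finset.sum_congr rfl fun j _ => ?_
  split_ifs with h <;> simp [h]

theorem offDiagAbsSum_diagonal (d : ι → ℝ) : offDiagAbsSum (diagonal d) = 0 := by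
  simp +contextual [offDiagAbsSum]

theorem offDiagAbsSum_smul (t : ℝ) (A : Matrix ι ι ℝ) :
    offDiagAbsSum (t • A) = |t| * offDiagAbsSum A := by
  simp [offDiagAbsSum, Finset.mul_sum, abs_mul]

theorem offDiagAbsSum_vecMulVec_self (u : ι → ℝ) :
    offDiagAbsSum (vecMulVec u u) = (∑ i, |u i|) ^ 2 - ∑ i, u i ^ 2 := by
  calc offDiagAbsSum (vecMulVec u u)
      = ∑ i, ∑ j, (|u i| * |u j| - if i = j then |u i| * |u j| else 0) := by
        unfold offDiagAbsSum
        refine Finset.sum_congr rfl fun i _ => Finset.sum_congr rfl fun j _ => ?_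
        by_cases h : i = j <;> simp [h, vecMulVec_apply, abs_mul]
    _ = (∑ i, |u i|) ^ 2 - ∑ i, u i ^ 2 := by
        simp [Finset.sum_sub_distrib, sq, Finset.sum_mul_sum, abs_mul_abs_self]

theorem sum_diag_mul_le_trace_mul_add_offDiagAbsSum {S Θ : Matrix ι ι ℝ} {lam : ℝ}
    (hS : ∀ i j, i ≠ j → |S i j| ≤ lam) (hΘ : Θ.IsSymm) :
    ∑ i, S i i * Θ i i ≤ (S * Θ).trace + lam * offDiagAbsSum Θ := by
  have hentry : ∀ i j, (if i = j then S i j * Θ j i else 0)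
      ≤ S i j * Θ j i + lam * if i ≠ j then |Θ i j| else 0 := fun i j => by
    by_cases h : i = j
    · simp [h]
    · rw [if_neg h, if_pos h, hΘ.apply]
      nlinarith [neg_abs_le (S i j * Θ i j), abs_mul (S i j) (Θ i j),
        mul_le_mul_of_nonneg_right (hS i j h) (abs_nonneg (Θ i j))]
  calc ∑ i, S i i * Θ i i = ∑ i, ∑ j, if i = j then S i j * Θ j i else 0 := by simp
    _ ≤ ∑ i, ∑ j, (S i j * Θ j i + lam * if i ≠ j then |Θ i j| else 0) :=
      Finset.sum_le_sum fun i _ => Finset.sum_le_sum fun j _ => hentry i j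
    _ = (S * Θ).trace + lam * offDiagAbsSum Θ := by
      simp only [Finset.sum_add_distrib, offDiagAbsSum, Finset.mul_sum, trace, diag, mul_apply]

end Matrix

section glasso

variable {n : ℕ} {S : Matrix (Fin n) (Fin n) ℝ} {lam : ℝ}

theorem glassoObj_eq (S : Matrix (Fin n) (Fin n) ℝ) (lam : ℝ) (Θ : Matrix (Fin n) (Fin n) ℝ) :
    glassoObj S lam Θ = (S * Θ).trace - Real.log Θ.det + lam * offDiagAbsSum Θ :=
  rfl

theorem glassoObj_diagonal {e : Fin n → ℝ} (he : ∀ i, e i ≠ 0) :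
    glassoObj S lam (diagonal e) = ∑ i, (S i i * e i - Real.log (e i)) := by
  rw [glassoObj_eq, det_diagonal, Real.log_prod fun i _ => he i, Finset.sum_sub_distrib,
    offDiagAbsSum_diagonal]
  simp [trace, mul_diagonal]

theorem glassoObj_inv_diag_le_diagonal (hS : ∀ i, 0 < S i i) {e : Fin n → ℝ}
    (he : ∀ i, 0 < e i) :
    glassoObj S lam (diagonal fun i => (S i i)⁻¹) ≤ glassoObj S lam (diagonal e) := by
  rw [glassoObj_diagonal fun i => (inv_pos.2 (hS i)).ne', glassoObj_diagonal fun i => (he i).ne']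
  refine Finset.sum_le_sum fun i _ => ?_
  rw [mul_inv_cancel₀ (hS i).ne', Real.log_inv, sub_neg_eq_add]
  exact Real.one_add_log_le_mul_sub_log (hS i) (he i)

theorem glassoObj_diagonal_diag_le (hS : ∀ i j, i ≠ j → |S i j| ≤ lam)
    {Θ : Matrix (Fin n) (Fin n) ℝ} (hΘ : Θ.PosDef) :
    glassoObj S lam (diagonal Θ.diag) ≤ glassoObj S lam Θ := by
  have hdiag : ∀ i, 0 < Θ i i := fun i => hΘ.diag_pos
  have hlog : Real.log Θ.det ≤ ∑ i, Real.log (Θ i i) := by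
    rw [← Real.log_prod fun i _ => (hdiag i).ne']
    exact Real.log_le_log hΘ.det_pos hΘ.det_le_prod_diag
  have htr := sum_diag_mul_le_trace_mul_add_offDiagAbsSum hS
    (isHermitian_iff_isSymm.1 hΘ.isHermitian)
  rw [glassoObj_diagonal (e := Θ.diag) fun i => (hdiag i).ne', glassoObj_eq,
    Finset.sum_sub_distrib]
  simp only [diag_apply]
  linarith

theorem glassoObj_diagonal_add_smul_vecMulVec {d : Fin n → ℝ} (hd : ∀ i, 0 < d i)
    {t : ℝ} (ht : 0 ≤ t) (v : Fin n → ℝ) :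
    glassoObj S lam (diagonal d + t • vecMulVec v v)
      = glassoObj S lam (diagonal d)
        + t * (v ⬝ᵥ S *ᵥ v + lam * offDiagAbsSum (vecMulVec v v))
        - Real.log (1 + t * ∑ i, v i ^ 2 / d i) := by
  have hdetd : 0 < (diagonal d).det := (PosDef.diagonal hd).det_pos
  have hinv : (diagonal d)⁻¹ = diagonal d⁻¹ := inv_eq_left_inv <| by
    rw [diagonal_mul_diagonal, ← diagonal_one]
    exact congrArg diagonal (funext fun i => inv_mul_cancel₀ (hd i).ne')
  have hdet : (diagonal d + t • vecMulVec v v).det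
      = (diagonal d).det * (1 + t * ∑ i, v i ^ 2 / d i) := by
    rw [← smul_vecMulVec, det_add_vecMulVec hdetd.ne'.isUnit, hinv]
    simp only [dotProduct, mulVec_diagonal, Finset.mul_sum]
    congr 2
    refine Finset.sum_congr rfl fun i _ => ?_
    simp only [Pi.inv_apply, Pi.smul_apply, smul_eq_mul]
    ring
  have hpos : 0 < 1 + t * ∑ i, v i ^ 2 / d i := by
    have : 0 ≤ ∑ i, v i ^ 2 / d i :=
      Finset.sum_nonneg fun i _ => div_nonneg (sq_nonneg _) (hd i).le
    positivity
  rw [glassoObj_eq, glassoObj_eq, hdet, Real.log_mul hdetd.ne' hpos.ne', mul_add, trace_add,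
    mul_smul_comm, trace_smul, trace_mul_vecMulVec_self, offDiagAbsSum_diagonal_add,
    offDiagAbsSum_smul, offDiagAbsSum_diagonal, abs_of_nonneg ht, smul_eq_mul]
  ring

theorem exists_glassoObj_lt_inv_diag (hS : S.IsSymm) (hSdiag : ∀ i, 0 < S i i) {i j : Fin n}
    (hij : i ≠ j) (hlt : lam < |S i j|) :
    ∃ Θ : Matrix (Fin n) (Fin n) ℝ, Θ.PosDef ∧
      glassoObj S lam Θ < glassoObj S lam (diagonal fun i => (S i i)⁻¹) := by
  obtain ⟨s, hs, hsS⟩ : ∃ s : ℝ, |s| = 1 ∧ s * S i j = -|S i j| := by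
    rcases abs_cases (S i j) with ⟨h, -⟩ | ⟨h, -⟩
    · exact ⟨-1, by simp, by rw [h]; ring⟩
    · exact ⟨1, by simp, by rw [h]; ring⟩
  have hs2 : s ^ 2 = 1 := by rw [← sq_abs, hs, one_pow]
  set v : Fin n → ℝ := Pi.single i 1 + Pi.single j s
  have hvi : v i = 1 := by simp [v, hij]
  have hvj : v j = s := by simp [v, hij.symm]
  have hdot : ∀ w : Fin n → ℝ, v ⬝ᵥ w = w i + s * w j := fun w => by
    simp [v, add_dotProduct]
  have hquad : v ⬝ᵥ S *ᵥ v = S i i + S j j - 2 * |S i j| := by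
    simp only [hdot, mulVec, dotProduct_comm (S _), hS.apply i j]
    linear_combination 2 * hsS + S j j * hs2
  have hweight : ∑ k, v k ^ 2 / (S k k)⁻¹ = S i i + S j j := by
    simp only [div_inv_eq_mul, sq, mul_assoc]
    rw [← dotProduct, hdot, hvi, hvj]
    linear_combination S j j * hs2
  have hpen : offDiagAbsSum (vecMulVec v v) = 2 := by
    rw [offDiagAbsSum_vecMulVec_self, Fintype.sum_eq_add i j hij, Fintype.sum_eq_add i j hij]
    · simp [v, hij, hij.symm, hs, hs2]
      norm_num
    all_goals intro k hk; simp [v, hk.1, hk.2]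
  obtain ⟨t, ht, hlog⟩ := Real.exists_pos_mul_sub_lt_log_one_add_mul
    (add_pos (hSdiag i) (hSdiag j)).le (by linarith : 0 < 2 * (|S i j| - lam))
  have hd : ∀ k, 0 < (S k k)⁻¹ := fun k => inv_pos.2 (hSdiag k)
  refine ⟨diagonal (fun k => (S k k)⁻¹) + t • vecMulVec v v,
    (PosDef.diagonal hd).add_posSemidef ((posSemidef_vecMulVec_self_star v).smul ht.le), ?_⟩
  rw [glassoObj_diagonal_add_smul_vecMulVec hd ht.le, hquad, hweight, hpen]
  linarith

end glasso

theorem glasso_diagonal_minimizer_iff_general {n : ℕ}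
    (S : Matrix (Fin n) (Fin n) ℝ) (hSsym : S.IsSymm)
    (hSdiag : ∀ i, 0 < S i i) (lam : ℝ) :
    (∃ Θhat : Matrix (Fin n) (Fin n) ℝ, Θhat.PosDef ∧
        IsMinOn (glassoObj S lam) {Θ : Matrix (Fin n) (Fin n) ℝ | Θ.PosDef} Θhat ∧
        ∀ i j, i ≠ j → Θhat i j = 0)
      ↔ (∀ i j, i ≠ j → |S i j| ≤ lam) := by
  constructor
  · rintro ⟨Θhat, hΘhat, hmin, hdiag⟩ i j hij
    by_contra! hlt
    obtain ⟨Θ, hΘ, hΘlt⟩ := exists_glassoObj_lt_inv_diag hSsym hSdiag hij hlt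
    have hle := glassoObj_inv_diag_le_diagonal (lam := lam) hSdiag (e := Θhat.diag)
      fun k => hΘhat.diag_pos
    rw [(isDiag_iff_diagonal_diag Θhat).1 hdiag] at hle
    linarith [isMinOn_iff.1 hmin Θ hΘ]
  · intro hoff
    refine ⟨_, PosDef.diagonal fun i => inv_pos.2 (hSdiag i), fun Θ hΘ => ?_,
      fun i j hij => diagonal_apply_ne _ hij⟩
    exact (glassoObj_inv_diag_le_diagonal hSdiag fun i => hΘ.diag_pos).trans
      (glassoObj_diagonal_diag_le hoff hΘ)

/-- There exists a minimizer of the graphical lasso objective over positive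
definite symmetric matrices which is diagonal (all off-diagonal entries zero)
if and only if `|Sᵢⱼ| ≤ λ` for all `i ≠ j`. -/
theorem glasso_diagonal_minimizer_iff {n : ℕ}
    (S : Matrix (Fin n) (Fin n) ℝ) (hSsym : S.IsSymm)
    (hSdiag : ∀ i, 0 < S i i) (lam : ℝ) (hlam : 0 ≤ lam) :
    (∃ Θhat : Matrix (Fin n) (Fin n) ℝ, Θhat.PosDef ∧
        IsMinOn (glassoObj S lam) {Θ : Matrix (Fin n) (Fin n) ℝ | Θ.PosDef} Θhat ∧
        ∀ i j, i ≠ j → Θhat i j = 0)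
      ↔ (∀ i j, i ≠ j → |S i j| ≤ lam) :=
  glasso_diagonal_minimizer_iff_general S hSsym hSdiag lam
end

section
/- Let S be a symmetric real n×n matrix with strictly positive diagonal entries, let λ ≥ 0, and suppose |Sᵢⱼ| ≤ λ for all i ≠ j. Then the diagonal matrix Θ̂ with diagonal entries Θ̂ᵢᵢ = 1/Sᵢᵢ and zero off-diagonal entries is positive definite and is a global minimizer of the graphical lasso objective f over the set of positive definite symmetric real n×n matrices. -/
/-!
Since `log x ≤ x - 1`, summing over eigenvalues gives `log det M ≤ tr M - n` for positive
definite `M`. Applied to `D Θ D` with `D = diag(√Sᵢᵢ)` this yields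
`n + ∑ log Sᵢᵢ ≤ ∑ Sᵢᵢ Θᵢᵢ - log det Θ`. The off-diagonal part of `tr(SΘ)` is at least
`-λ ∑_{i≠j} |Θᵢⱼ|` because `|Sᵢⱼ| ≤ λ`, so it is absorbed by the penalty. Hence
`f(Θ) ≥ n + ∑ log Sᵢᵢ`, which is exactly the value of `f` at `diag(1/Sᵢᵢ)`.
-/

open Matrix

namespace Matrix

variable {ι : Type*} [Fintype ι] [DecidableEq ι]

theorem PosDef.log_det_le_trace_sub_card_s2 {M : Matrix ι ι ℝ} (hM : M.PosDef) :
    Real.log M.det ≤ M.trace - Fintype.card ι := by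
  have hev := hM.eigenvalues_pos
  simp only [hM.1.det_eq_prod_eigenvalues, hM.1.trace_eq_sum_eigenvalues,
    RCLike.ofReal_real_eq_id, id_eq]
  rw [Real.log_prod fun i _ => (hev i).ne']
  calc ∑ i, Real.log (hM.1.eigenvalues i)
      ≤ ∑ i, (hM.1.eigenvalues i - 1) :=
        Finset.sum_le_sum fun i _ => Real.log_le_sub_one_of_pos (hev i)
    _ = _ := by simp [Finset.sum_sub_distrib]

theorem PosDef.log_det_add_sum_log_add_card_le {Θ : Matrix ι ι ℝ} (hΘ : Θ.PosDef)
    {d : ι → ℝ} (hd : ∀ i, 0 < d i) :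
    Real.log Θ.det + ∑ i, Real.log (d i) + Fintype.card ι ≤ ∑ i, d i * Θ i i := by
  set D := diagonal fun i => √(d i)
  have hsq : ∀ i, √(d i) * √(d i) = d i := fun i => Real.mul_self_sqrt (hd i).le
  have hDinj : Function.Injective D.mulVec :=
    mulVec_injective_iff_isUnit.mpr <| isUnit_diagonal.mpr <|
      Pi.isUnit_iff.mpr fun i => (Real.sqrt_pos.mpr (hd i)).ne'.isUnit
  have hscaled := (hΘ.conjTranspose_mul_mul_same hDinj).log_det_le_trace_sub_card_s2
  have hdet : (Dᴴ * Θ * D).det = (∏ i, d i) * Θ.det := by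
    simp only [D, diagonal_conjTranspose, det_mul, det_diagonal, star_trivial]
    rw [mul_right_comm, ← Finset.prod_mul_distrib]
    simp only [hsq]
  have htrace : (Dᴴ * Θ * D).trace = ∑ i, d i * Θ i i := by
    simp only [D, diagonal_conjTranspose, trace, diag_apply, mul_diagonal, diagonal_mul,
      star_trivial, mul_right_comm _ (Θ _ _), hsq]
  rw [hdet, htrace, Real.log_mul (Finset.prod_pos fun i _ => hd i).ne' hΘ.det_pos.ne',
    Real.log_prod fun i _ => (hd i).ne'] at hscaled
  linarith

theorem sum_diag_mul_diag_le_trace_mul_add {S Θ : Matrix ι ι ℝ} {lam : ℝ}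
    (hoff : ∀ i j, i ≠ j → |S i j| ≤ lam) :
    ∑ i, S i i * Θ i i ≤ (S * Θ).trace + lam * ∑ i, ∑ j, if i ≠ j then |Θ i j| else 0 := by
  have htrace : (S * Θ).trace = ∑ i, ∑ j, S j i * Θ i j := by
    rw [trace_mul_comm]; simp [trace, mul_apply, mul_comm]
  rw [htrace, Finset.mul_sum, ← Finset.sum_add_distrib]
  refine Finset.sum_le_sum fun i _ => ?_
  rw [Finset.mul_sum, ← Finset.sum_add_distrib, ← Finset.add_sum_erase _ _ (Finset.mem_univ i)]
  simp only [ne_eq, not_true_eq_false, if_false, mul_zero, add_zero, le_add_iff_nonneg_right]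
  refine Finset.sum_nonneg fun j hj => ?_
  have hij : i ≠ j := (Finset.ne_of_mem_erase hj).symm
  have hbound : |S j i * Θ i j| ≤ lam * |Θ i j| := by
    rw [abs_mul]; exact mul_le_mul_of_nonneg_right (hoff j i hij.symm) (abs_nonneg _)
  rw [if_pos hij]
  linarith [neg_abs_le (S j i * Θ i j)]

end Matrix

section GraphicalLasso

variable {n : ℕ} {S : Matrix (Fin n) (Fin n) ℝ} {lam : ℝ}

theorem glassoObj_diagonal_inv_diag (hSdiag : ∀ i, S i i ≠ 0) :
    glassoObj S lam (diagonal fun i => 1 / S i i) = n + ∑ i, Real.log (S i i) := by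
  have htrace : (S * diagonal fun i => 1 / S i i).trace = n := by
    simp [trace, mul_diagonal, hSdiag]
  have hlogdet : Real.log (diagonal fun i => 1 / S i i).det = -∑ i, Real.log (S i i) := by
    rw [det_diagonal, Real.log_prod fun i _ => one_div_ne_zero (hSdiag i)]
    simp
  have hpenalty : (∑ i, ∑ j, if i ≠ j then |(diagonal fun k => 1 / S k k) i j| else 0) = 0 :=
    Finset.sum_eq_zero fun i _ => Finset.sum_eq_zero fun j _ => by
      split_ifs with hij
      · simp [diagonal_apply_ne _ hij]
      · rfl
  rw [glassoObj, htrace, hlogdet, hpenalty]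
  ring

theorem le_glassoObj_of_posDef (hSdiag : ∀ i, 0 < S i i) (hoff : ∀ i j, i ≠ j → |S i j| ≤ lam)
    {Θ : Matrix (Fin n) (Fin n) ℝ} (hΘ : Θ.PosDef) :
    n + ∑ i, Real.log (S i i) ≤ glassoObj S lam Θ := by
  have hdiag := hΘ.log_det_add_sum_log_add_card_le hSdiag
  have hoffdiag := sum_diag_mul_diag_le_trace_mul_add (Θ := Θ) hoff
  rw [Fintype.card_fin] at hdiag
  rw [glassoObj]
  linarith

end GraphicalLasso

theorem glasso_diagonal_is_minimizer_general {n : ℕ}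
    (S : Matrix (Fin n) (Fin n) ℝ)
    (hSdiag : ∀ i, 0 < S i i) (lam : ℝ)
    (hoff : ∀ i j, i ≠ j → |S i j| ≤ lam) :
    (Matrix.diagonal fun i => 1 / S i i).PosDef ∧
    IsMinOn (glassoObj S lam) {Θ : Matrix (Fin n) (Fin n) ℝ | Θ.PosDef}
      (Matrix.diagonal fun i => 1 / S i i) := by
  refine ⟨posDef_diagonal_iff.mpr fun i => one_div_pos.mpr (hSdiag i), fun Θ hΘ => ?_⟩
  exact (glassoObj_diagonal_inv_diag fun i => (hSdiag i).ne').trans_le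
    (le_glassoObj_of_posDef hSdiag hoff hΘ)

/-- If `|Sᵢⱼ| ≤ λ` for all `i ≠ j`, then the diagonal matrix with entries
`1/Sᵢᵢ` is positive definite and globally minimizes the graphical lasso
objective over positive definite symmetric matrices. -/
theorem glasso_diagonal_is_minimizer {n : ℕ}
    (S : Matrix (Fin n) (Fin n) ℝ) (hSsym : S.IsSymm)
    (hSdiag : ∀ i, 0 < S i i) (lam : ℝ) (hlam : 0 ≤ lam)
    (hoff : ∀ i j, i ≠ j → |S i j| ≤ lam) :
    (Matrix.diagonal fun i => 1 / S i i).PosDef ∧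
    IsMinOn (glassoObj S lam) {Θ : Matrix (Fin n) (Fin n) ℝ | Θ.PosDef}
      (Matrix.diagonal fun i => 1 / S i i) :=
  glasso_diagonal_is_minimizer_general S hSdiag lam hoff
end

section
/- Let S be a symmetric real n×n matrix and λ ≥ 0. The graphical lasso objective f(Θ) = trace(S·Θ) − log det Θ + λ·∑_{i≠j} |Θᵢⱼ| is convex on the set of positive definite symmetric real n×n matrices: for all positive definite symmetric A, B and all t ∈ [0,1], f(t·A + (1−t)·B) ≤ t·f(A) + (1−t)·f(B). -/
/-!
The trace term is linear and the off-diagonal ℓ¹ penalty is a nonnegative multiple of a sum of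
absolute values of coordinates, so everything reduces to concavity of `log det` on positive
definite matrices. With `R = A^{1/2}` and `C = R⁻¹ B R⁻¹` one has `a A + b B = R (a I + b C) R`, so
concavity along the segment from `A` to `B` reduces to the segment from `I` to `C`, where
diagonalizing `C` turns it into the concavity of `Real.log` at each eigenvalue.
-/

open Matrix

open scoped MatrixOrder ComplexOrder

theorem ConvexOn.fun_sum {𝕜 E β ι : Type*} [Semiring 𝕜] [PartialOrder 𝕜] [AddCommMonoid E]
    [AddCommMonoid β] [PartialOrder β] [IsOrderedAddMonoid β] [SMul 𝕜 E] [Module 𝕜 β]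
    {s : Set E} (hs : Convex 𝕜 s) {t : Finset ι} {f : ι → E → β}
    (hf : ∀ i ∈ t, ConvexOn 𝕜 s (f i)) : ConvexOn 𝕜 s fun x => ∑ i ∈ t, f i x := by
  classical
  induction t using Finset.induction_on with
  | empty => simpa using convexOn_const 0 hs
  | insert i t hi ih =>
    simp only [Finset.sum_insert hi]
    exact (hf i (t.mem_insert_self i)).add (ih fun j hj => hf j (Finset.mem_insert_of_mem hj))

namespace Matrix

variable {n : Type*}

theorem convex_setOf_posDef {𝕜 : Type*} [RCLike 𝕜] : Convex ℝ {A : Matrix n n 𝕜 | A.PosDef} := by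
  intro A hA B hB a b ha hb hab
  rcases ha.eq_or_lt with rfl | ha
  · rw [zero_add] at hab
    simpa [hab] using hB
  · exact (hA.smul ha).add_posSemidef (hB.posSemidef.smul hb)

variable [Fintype n] [DecidableEq n]

lemma IsHermitian.det_cfc {𝕜 : Type*} [RCLike 𝕜] {A : Matrix n n 𝕜} (hA : A.IsHermitian)
    (f : ℝ → ℝ) : (cfc f A).det = ∏ i, (f (hA.eigenvalues i) : 𝕜) := by
  rw [hA.cfc_eq, IsHermitian.cfc, Unitary.conjStarAlgAut_apply, det_mul_right_comm,
    Unitary.mul_star_self_of_mem hA.eigenvectorUnitary.2, one_mul, det_diagonal]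
  simp

theorem PosDef.mul_log_det_le_log_det_smul_one_add_smul {C : Matrix n n ℝ} (hC : C.PosDef)
    {a b : ℝ} (ha : 0 ≤ a) (hb : 0 ≤ b) (hab : a + b = 1) :
    b * Real.log C.det ≤ Real.log (a • 1 + b • C).det := by
  set μ := hC.isHermitian.eigenvalues
  have hμ : ∀ i, μ i ∈ Set.Ioi 0 := hC.eigenvalues_pos
  have hlog : ∀ i, b * Real.log (μ i) ≤ Real.log (a + b * μ i) := by
    intro i
    simpa using strictConcaveOn_log_Ioi.concaveOn.2 (Set.mem_Ioi.2 one_pos) (hμ i) ha hb hab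
  have hpos : ∀ i, 0 < a + b * μ i := fun i => by
    simpa using (convex_Ioi 0) (Set.mem_Ioi.2 one_pos) (hμ i) ha hb hab
  have hcfc : a • (1 : Matrix n n ℝ) + b • C = cfc (fun x => a + b * x) C := by
    rw [cfc_add .., cfc_const_mul .., cfc_const .., cfc_id' ..]
    simp [Algebra.algebraMap_eq_smul_one]
  rw [hcfc, hC.isHermitian.det_cfc, hC.isHermitian.det_eq_prod_eigenvalues]
  simp only [RCLike.ofReal_real_eq_id, id]
  rw [Real.log_prod fun i _ => (hpos i).ne', Real.log_prod fun i _ => (hμ i).ne', Finset.mul_sum]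
  exact Finset.sum_le_sum fun i _ => hlog i

theorem concaveOn_log_det : ConcaveOn ℝ {A : Matrix n n ℝ | A.PosDef} fun A => Real.log A.det := by
  refine ⟨convex_setOf_posDef, fun A hA B hB a b ha hb hab => ?_⟩
  set R := CFC.sqrt A
  have hRR : R * R = A := CFC.sqrt_mul_sqrt_self A hA.posSemidef.nonneg
  have hRu : IsUnit R := CFC.isUnit_sqrt_iff_isStrictlyPositive.2 hA.isStrictlyPositive
  have hRinv : star R⁻¹ = R⁻¹ := (CFC.sqrt_nonneg A).posSemidef.isHermitian.inv
  set C := R⁻¹ * B * R⁻¹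
  have hC : C.PosDef := by
    simpa only [C, hRinv] using
      (IsUnit.posDef_star_left_conjugate_iff (isUnit_nonsing_inv_iff.2 hRu)).2 hB
  have hBC : B = R * C * R := by
    simp only [C, ← mul_assoc, mul_nonsing_inv _ ((isUnit_iff_isUnit_det R).1 hRu), one_mul]
    rw [mul_assoc, nonsing_inv_mul _ ((isUnit_iff_isUnit_det R).1 hRu), mul_one]
  have hlog_conj : ∀ M : Matrix n n ℝ, M.PosDef →
      Real.log (R * M * R).det = Real.log A.det + Real.log M.det := by
    intro M hM
    rw [det_mul, det_mul, mul_right_comm, ← det_mul, hRR,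
      Real.log_mul hA.det_pos.ne' hM.det_pos.ne']
  have hsum : a • A + b • B = R * (a • 1 + b • C) * R := by
    rw [hBC, mul_add, add_mul, Matrix.mul_smul, Matrix.smul_mul, mul_one, hRR, Matrix.mul_smul,
      Matrix.smul_mul]
  have hC_concave := hC.mul_log_det_le_log_det_smul_one_add_smul ha hb hab
  show a * Real.log A.det + b * Real.log B.det ≤ Real.log (a • A + b • B).det
  rw [hsum, hlog_conj _ (convex_setOf_posDef (by simpa using PosDef.one) hC ha hb hab), hBC,
    hlog_conj _ hC]
  linear_combination hC_concave + Real.log A.det * hab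

theorem convexOn_sum_offDiag_abs :
    ConvexOn ℝ Set.univ fun Θ : Matrix n n ℝ => ∑ i, ∑ j, if i ≠ j then |Θ i j| else 0 := by
  refine ConvexOn.fun_sum convex_univ fun i _ => ConvexOn.fun_sum convex_univ fun j _ => ?_
  by_cases hij : i = j
  · simpa [hij] using convexOn_const 0 convex_univ
  · simpa [hij, Function.comp_def] using
      (convexOn_norm convex_univ).comp_linearMap (entryLinearMap ℝ ℝ i j)

end Matrix

theorem convexOn_glassoObj {n : ℕ} (S : Matrix (Fin n) (Fin n) ℝ) {lam : ℝ} (hlam : 0 ≤ lam) :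
    ConvexOn ℝ {Θ | Θ.PosDef} (glassoObj S lam) := by
  have htrace : ConvexOn ℝ {Θ : Matrix (Fin n) (Fin n) ℝ | Θ.PosDef} fun Θ => (S * Θ).trace :=
    ((traceLinearMap (Fin n) ℝ ℝ).comp (LinearMap.mulLeft ℝ S)).convexOn convex_setOf_posDef
  exact (htrace.sub concaveOn_log_det).add
    ((convexOn_sum_offDiag_abs.subset (Set.subset_univ _) convex_setOf_posDef).smul hlam)

theorem glassoObj_convex_general {n : ℕ}
    (S : Matrix (Fin n) (Fin n) ℝ) (lam : ℝ) (hlam : 0 ≤ lam) :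
    ∀ A B : Matrix (Fin n) (Fin n) ℝ, A.PosDef → B.PosDef →
      ∀ t : ℝ, 0 ≤ t → t ≤ 1 →
        glassoObj S lam (t • A + (1 - t) • B)
          ≤ t * glassoObj S lam A + (1 - t) * glassoObj S lam B :=
  fun _ _ hA hB t ht0 ht1 =>
    (convexOn_glassoObj S hlam).2 hA hB ht0 (sub_nonneg.2 ht1) (add_sub_cancel t 1)

/-- The graphical lasso objective is convex on the set of positive definite
symmetric real `n×n` matrices. -/
theorem glassoObj_convex {n : ℕ}
    (S : Matrix (Fin n) (Fin n) ℝ) (hSsym : S.IsSymm) (lam : ℝ) (hlam : 0 ≤ lam) :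
    ∀ A B : Matrix (Fin n) (Fin n) ℝ, A.PosDef → B.PosDef →
      ∀ t : ℝ, 0 ≤ t → t ≤ 1 →
        glassoObj S lam (t • A + (1 - t) • B)
          ≤ t * glassoObj S lam A + (1 - t) * glassoObj S lam B :=
  glassoObj_convex_general S lam hlam
end
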